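/- Let k be a field with char k ≠ 2. Let A = k[u,y]/(y² − u²) and B = k[x,y]/(y² − x⁴), and let φ : A → B be the k-algebra homomorphism with φ(u) = x² and φ(y) = y (well defined since y² − x⁴ maps to 0). Then: (i) φ is injective and B is a free A-module with basis {1, x}; (ii) the unique A-algebra automorphism σ of B with σ(x) = −x has fixed subalgebra B^σ equal to the image of φ; (iii) letting e : B → A be the A-linear map with e(1) = 0 and e(x) = 1, the map B → Hom_A(B, A), b ↦ (c ↦ e(bc)), is an isomorphism of B-modules, so Hom_A(B, A) is free of rank one over B generated by e; (iv) e ∘ σ = −e. -/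

import Mathlib

open MvPolynomial

set_option synthInstance.maxHeartbeats 1000000
set_option maxHeartbeats 1000000

/-- The affine node `A = k[u,y]/(y² - u²)` (variables indexed by `Bool`: `u = X false`,
`y = X true`). -/
abbrev NodeA (k : Type) [Field k] : Type :=
  MvPolynomial Bool k ⧸ (Ideal.span {(X true ^ 2 - X false ^ 2 : MvPolynomial Bool k)})

/-- The class of `u` in `k[u,y]/(y² - u²)`. -/
noncomputable def nodeAU (k : Type) [Field k] : NodeA k :=
  Ideal.Quotient.mk _ (X false)

/-- The class of `y` in `k[u,y]/(y² - u²)`. -/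
noncomputable def nodeAY (k : Type) [Field k] : NodeA k :=
  Ideal.Quotient.mk _ (X true)

/-- The affine tac-node `B = k[x,y]/(y² - x⁴)`. -/
abbrev TacNode (k : Type) [Field k] : Type :=
  MvPolynomial (Fin 2) k ⧸ (Ideal.span {(X 1 ^ 2 - X 0 ^ 4 : MvPolynomial (Fin 2) k)})

/-- The class of `x` in `k[x,y]/(y² - x⁴)`. -/
noncomputable def tacX (k : Type) [Field k] : TacNode k :=
  Ideal.Quotient.mk _ (X 0)

/-- The class of `y` in `k[x,y]/(y² - x⁴)`. -/
noncomputable def tacY (k : Type) [Field k] : TacNode k :=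
  Ideal.Quotient.mk _ (X 1)

/-! Over the node `A`, the tac-node is the quadratic algebra `A[ω]/(ω² - u)`: `x ↦ ω`, `y ↦ y`
is well defined because `y² = u² = ω⁴`, and it is inverse to `ω ↦ x`. In coordinates
`b = b₀ + b₁ ω`, the involution `σ` is `b₀ + b₁ ω ↦ b₀ - b₁ ω`, whose fixed points are `A` as `2` is
invertible, and `e` is `b ↦ b₁`. Since `e b = b₁` and `e (b ω) = b₀`, the functional `e (b * -)`
determines `b`, and every functional `f` is `e (b * -)` for `b = f ω + f 1 · ω`. -/

open QuadraticAlgebra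

namespace QuadraticAlgebra

theorem lift_omega {R C : Type*} [CommRing R] [Ring C] [Algebra R C] {a b : R}
    (x : {x : C // x * x = a • 1 + b • x}) : lift x ω = x := by
  rw [← lift_symm_apply_coe, Equiv.symm_apply_apply]

section Transport

variable {R B : Type*} [CommRing R] [CommRing B] [Algebra R B] {a b : R}
  (ψ : QuadraticAlgebra R a b ≃ₐ[R] B)

theorem eq_re_smul_one_add_im_smul (z : B) :
    z = (ψ.symm z).re • 1 + (ψ.symm z).im • ψ ω := by
  conv_lhs => rw [← ψ.apply_symm_apply z, ← mk_eta (ψ.symm z), mk_eq_add_smul_omega]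
  rw [map_add, map_smul, AlgEquiv.commutes, Algebra.algebraMap_eq_smul_one]

include ψ in
theorem algebraMap_injective_of_algEquiv : Function.Injective (algebraMap R B) := by
  have h : ⇑(algebraMap R B) = ψ ∘ algebraMap R (QuadraticAlgebra R a b) :=
    funext fun r => (ψ.commutes r).symm
  rw [h]
  exact ψ.injective.comp algebraMap_injective

theorem mem_range_algebraMap_iff (z : B) :
    z ∈ Set.range (algebraMap R B) ↔ (ψ.symm z).im = 0 := by
  constructor
  · rintro ⟨r, rfl⟩
    rw [AlgEquiv.commutes, algebraMap_im]
  · intro h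
    refine ⟨(ψ.symm z).re, ?_⟩
    conv_rhs => rw [eq_re_smul_one_add_im_smul ψ z, h, zero_smul, add_zero]
    rw [Algebra.algebraMap_eq_smul_one]

noncomputable def basisOfAlgEquiv : Module.Basis (Fin 2) R B :=
  (QuadraticAlgebra.basis a b).map ψ.toLinearEquiv

theorem basisOfAlgEquiv_zero : basisOfAlgEquiv ψ 0 = 1 := by
  have h : QuadraticAlgebra.basis a b 0 = 1 := by ext <;> simp [QuadraticAlgebra.basis]
  rw [basisOfAlgEquiv, Module.Basis.map_apply, h]
  exact map_one ψ

theorem basisOfAlgEquiv_one : basisOfAlgEquiv ψ 1 = ψ ω := by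
  have h : QuadraticAlgebra.basis a b 1 = ω := by ext <;> simp [QuadraticAlgebra.basis]
  rw [basisOfAlgEquiv, Module.Basis.map_apply, h]
  rfl

theorem linearMap_ext_of_algEquiv {M : Type*} [AddCommGroup M] [Module R M] {f g : B →ₗ[R] M}
    (h1 : f 1 = g 1) (hω : f (ψ ω) = g (ψ ω)) : f = g :=
  LinearMap.ext fun z => by
    rw [eq_re_smul_one_add_im_smul ψ z]
    simp only [map_add, map_smul, h1, hω]

theorem algHom_ext_of_algEquiv {C : Type*} [Ring C] [Algebra R C] {f g : B →ₐ[R] C}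
    (hω : f (ψ ω) = g (ψ ω)) : f = g :=
  AlgHom.toLinearMap_injective (linearMap_ext_of_algEquiv ψ (by simp) hω)

section Pairing

variable (e : B →ₗ[R] R) (he1 : e 1 = 0) (heω : e (ψ ω) = 1)
include he1 heω

theorem apply_eq_im_symm (z : B) : e z = (ψ.symm z).im := by
  conv_lhs => rw [eq_re_smul_one_add_im_smul ψ z]
  simp [he1, heω]

theorem bijective_comp_mulLeft : Function.Bijective fun z : B => e ∘ₗ LinearMap.mulLeft R z := by
  have hmul : ∀ (z : B) (w : QuadraticAlgebra R a b), e (z * ψ w) = (ψ.symm z * w).im := by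
    intro z w
    rw [apply_eq_im_symm ψ e he1 heω, map_mul, AlgEquiv.symm_apply_apply]
  constructor
  · intro z z' h
    have him := congr($h (ψ 1))
    have hω := congr($h (ψ ω))
    simp only [LinearMap.comp_apply, LinearMap.mulLeft_apply, hmul, mul_one] at him hω
    apply ψ.symm.injective
    ext
    · simpa [him] using hω
    · exact him
  · intro f
    refine ⟨ψ ⟨f (ψ ω) - b * f 1, f 1⟩, linearMap_ext_of_algEquiv ψ ?_ ?_⟩
    · simp [apply_eq_im_symm ψ e he1 heω]
    · simp [hmul]

end Pairing

end Transport

section Conjugation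

variable {R B : Type*} [CommRing R] [CommRing B] [Algebra R B] {a : R}
  (ψ : QuadraticAlgebra R a 0 ≃ₐ[R] B) (σ : B →ₐ[R] B) (hσ : σ (ψ ω) = - ψ ω)
include hσ

theorem symm_apply_eq_of_apply_omega_eq_neg (z : B) :
    ψ.symm (σ z) = ⟨(ψ.symm z).re, -(ψ.symm z).im⟩ := by
  conv_lhs => rw [eq_re_smul_one_add_im_smul ψ z]
  ext <;> simp [hσ]

theorem setOf_apply_eq_self_eq_range_algebraMap (h2 : (2 : R) ∈ nonZeroDivisors R) :
    {z : B | σ z = z} = Set.range (algebraMap R B) := by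
  ext z
  rw [Set.mem_ofPred_eq, mem_range_algebraMap_iff ψ, ← ψ.symm.injective.eq_iff,
    symm_apply_eq_of_apply_omega_eq_neg ψ σ hσ, QuadraticAlgebra.ext_iff]
  simp only [true_and, neg_eq_iff_add_eq_zero, ← two_mul, mul_comm (2 : R)]
  exact mul_right_mem_nonZeroDivisors_eq_zero_iff h2

theorem apply_apply_eq_neg_apply (e : B →ₗ[R] R) (he1 : e 1 = 0) (heω : e (ψ ω) = 1) (z : B) :
    e (σ z) = - e z := by
  rw [apply_eq_im_symm ψ e he1 heω, apply_eq_im_symm ψ e he1 heω,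
    symm_apply_eq_of_apply_omega_eq_neg ψ σ hσ]

end Conjugation

end QuadraticAlgebra

theorem nodeAY_sq (k : Type) [Field k] : nodeAY k ^ 2 = nodeAU k ^ 2 := by
  rw [← sub_eq_zero, nodeAY, nodeAU, ← map_pow, ← map_pow, ← map_sub,
    Ideal.Quotient.eq_zero_iff_mem]
  exact Ideal.subset_span rfl

noncomputable def tacNodeToQuadraticAlgebra (k : Type) [Field k] :
    TacNode k →ₐ[k] QuadraticAlgebra (NodeA k) (nodeAU k) 0 :=
  Ideal.Quotient.liftₐ _ (aeval ![ω, algebraMap _ _ (nodeAY k)]) fun p hp => by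
    obtain ⟨q, rfl⟩ := Ideal.mem_span_singleton'.mp hp
    have hω : (ω : QuadraticAlgebra (NodeA k) (nodeAU k) 0) ^ 2 = algebraMap _ _ (nodeAU k) := by
      simp [sq, omega_mul_omega_eq_algebraMap]
    rw [map_mul, map_sub, map_pow, map_pow, aeval_X, aeval_X]
    simp only [Matrix.cons_val_zero, Matrix.cons_val_one]
    rw [← map_pow, nodeAY_sq, map_pow, ← hω, ← pow_mul, sub_self, mul_zero]

theorem tacNodeToQuadraticAlgebra_tacX (k : Type) [Field k] :
    tacNodeToQuadraticAlgebra k (tacX k) = ω :=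
  (Ideal.Quotient.lift_mk _ _ _).trans (by simp)

theorem tacNodeToQuadraticAlgebra_tacY (k : Type) [Field k] :
    tacNodeToQuadraticAlgebra k (tacY k) = algebraMap _ _ (nodeAY k) :=
  (Ideal.Quotient.lift_mk _ _ _).trans (by simp)

section TacNode

variable (k : Type) [Field k] [Algebra (NodeA k) (TacNode k)]
  [IsScalarTower k (NodeA k) (TacNode k)]
  (hu : algebraMap (NodeA k) (TacNode k) (nodeAU k) = tacX k ^ 2)
  (hy : algebraMap (NodeA k) (TacNode k) (nodeAY k) = tacY k)

include hu hy

theorem tacNodeToQuadraticAlgebra_algebraMap (a : NodeA k) :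
    tacNodeToQuadraticAlgebra k (algebraMap (NodeA k) (TacNode k) a) = algebraMap _ _ a := by
  suffices (tacNodeToQuadraticAlgebra k).comp (IsScalarTower.toAlgHom k _ (TacNode k)) =
      IsScalarTower.toAlgHom k (NodeA k) (QuadraticAlgebra (NodeA k) (nodeAU k) 0) from
    congr($this a)
  refine Ideal.Quotient.algHom_ext k (MvPolynomial.algHom_ext fun i => ?_)
  cases i
  · change tacNodeToQuadraticAlgebra k (algebraMap _ _ (nodeAU k)) = algebraMap _ _ (nodeAU k)
    rw [hu, map_pow, tacNodeToQuadraticAlgebra_tacX, sq (ω : QuadraticAlgebra (NodeA k) _ _),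
      omega_mul_omega_eq_algebraMap, map_zero, zero_mul, add_zero]
  · change tacNodeToQuadraticAlgebra k (algebraMap _ _ (nodeAY k)) = algebraMap _ _ (nodeAY k)
    rw [hy, tacNodeToQuadraticAlgebra_tacY]

noncomputable def quadraticAlgebraEquivTacNode :
    QuadraticAlgebra (NodeA k) (nodeAU k) 0 ≃ₐ[NodeA k] TacNode k :=
  AlgEquiv.ofAlgHom
    (QuadraticAlgebra.lift ⟨tacX k, by
      rw [Algebra.smul_def, Algebra.smul_def, map_zero, zero_mul, add_zero, mul_one, hu,
        sq (tacX k)]⟩)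
    { tacNodeToQuadraticAlgebra k with
      commutes' := tacNodeToQuadraticAlgebra_algebraMap k hu hy }
    (by
      refine AlgHom.restrictScalars_injective k
        (Ideal.Quotient.algHom_ext k (MvPolynomial.algHom_ext fun i => ?_))
      fin_cases i
      · change QuadraticAlgebra.lift _ (tacNodeToQuadraticAlgebra k (tacX k)) = tacX k
        rw [tacNodeToQuadraticAlgebra_tacX, lift_omega]
      · change QuadraticAlgebra.lift _ (tacNodeToQuadraticAlgebra k (tacY k)) = tacY k
        rw [tacNodeToQuadraticAlgebra_tacY, AlgHom.commutes, hy])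
    (QuadraticAlgebra.algHom_ext (by
      change tacNodeToQuadraticAlgebra k (QuadraticAlgebra.lift _ ω) = ω
      rw [lift_omega, tacNodeToQuadraticAlgebra_tacX]))

theorem quadraticAlgebraEquivTacNode_omega : quadraticAlgebraEquivTacNode k hu hy ω = tacX k :=
  lift_omega _

end TacNode

/-- Let `k` be a field with `char k ≠ 2`, `A = k[u,y]/(y² - u²)`,
`B = k[x,y]/(y² - x⁴)`, and `φ : A → B` the `k`-algebra homomorphism with `φ u = x²`,
`φ y = y` (encoded as an algebra structure).  Then:
(i) `φ` is injective and `B` is a free `A`-module with basis `{1, x}`;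
(ii) the unique `A`-algebra automorphism `σ` of `B` with `σ x = -x` has fixed subalgebra the
image of `φ`;
(iii) letting `e : B → A` be the `A`-linear map with `e 1 = 0` and `e x = 1`, the map
`Θ : B → Hom_A(B, A)`, `b ↦ (c ↦ e (b * c))`, is an isomorphism of `B`-modules (with the
`B`-module structure `(b • f) c = f (b * c)` on the target), so `Hom_A(B, A)` is free of rank
one over `B`, generated by `e = Θ 1`;
(iv) `e ∘ σ = -e`. -/
theorem stmt10 (k : Type) [Field k] (h2 : (2 : k) ≠ 0)
    [Algebra (NodeA k) (TacNode k)] [IsScalarTower k (NodeA k) (TacNode k)]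
    (hu : algebraMap (NodeA k) (TacNode k) (nodeAU k) = tacX k ^ 2)
    (hy : algebraMap (NodeA k) (TacNode k) (nodeAY k) = tacY k)
    (σ : TacNode k ≃ₐ[NodeA k] TacNode k) (hσ : σ (tacX k) = - tacX k)
    (e : TacNode k →ₗ[NodeA k] NodeA k) (he1 : e 1 = 0) (hex : e (tacX k) = 1)
    (Θ : TacNode k → (TacNode k →ₗ[NodeA k] NodeA k))
    (hΘ : ∀ b c, Θ b c = e (b * c)) :
    -- (i)
    Function.Injective (algebraMap (NodeA k) (TacNode k)) ∧
    (∃ bas : Module.Basis (Fin 2) (NodeA k) (TacNode k), bas 0 = 1 ∧ bas 1 = tacX k) ∧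
    -- (ii)
    (∀ σ' : TacNode k ≃ₐ[NodeA k] TacNode k, σ' (tacX k) = - tacX k → σ' = σ) ∧
    ({b : TacNode k | σ b = b} = Set.range (algebraMap (NodeA k) (TacNode k))) ∧
    -- (iii)
    (∀ b b', Θ (b + b') = Θ b + Θ b') ∧
    (∀ b b' c, Θ (b' * b) c = Θ b (b' * c)) ∧
    Function.Bijective Θ ∧
    Θ 1 = e ∧
    -- (iv)
    (∀ b, e (σ b) = - e b) := by
  set ψ := quadraticAlgebraEquivTacNode k hu hy
  have hψ : ψ ω = tacX k := quadraticAlgebraEquivTacNode_omega k hu hy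
  have hσω : σ (ψ ω) = -ψ ω := by rw [hψ, hσ]
  have heω : e (ψ ω) = 1 := by rw [hψ, hex]
  have h2A : (2 : NodeA k) ∈ nonZeroDivisors (NodeA k) := by
    have := (isUnit_iff_ne_zero.mpr h2).map (algebraMap k (NodeA k))
    rw [map_ofNat] at this
    exact this.mem_nonZeroDivisors
  have hΘe : Θ = fun b => e ∘ₗ LinearMap.mulLeft (NodeA k) b :=
    funext fun b => LinearMap.ext (hΘ b)
  refine ⟨algebraMap_injective_of_algEquiv ψ,
    ⟨basisOfAlgEquiv ψ, basisOfAlgEquiv_zero ψ, by rw [basisOfAlgEquiv_one, hψ]⟩,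
    fun σ' hσ' => AlgEquiv.coe_toAlgHom_injective (algHom_ext_of_algEquiv ψ ?_),
    setOf_apply_eq_self_eq_range_algebraMap ψ σ hσω h2A,
    fun b b' => ?_, fun b b' c => ?_, hΘe ▸ bijective_comp_mulLeft ψ e he1 heω, ?_,
    apply_apply_eq_neg_apply ψ σ hσω e he1 heω⟩
  · change σ' (ψ ω) = σ (ψ ω)
    rw [hψ, hσ, hσ']
  · exact LinearMap.ext fun c => by rw [LinearMap.add_apply, hΘ, hΘ, hΘ, add_mul, map_add]
  · rw [hΘ, hΘ, mul_assoc, mul_left_comm]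
  · exact LinearMap.ext fun c => by rw [hΘ, one_mul]
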